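/- arXiv:2505.13687 — 12 statements merged into one kernel-verified Lean document; each statement's English description precedes it below -/
import Mathlib

section
/- Revenue equivalence on connected type spaces: Suppose that for every agent i and every v_{-i} ∈ Θ_{-i}, the slice Θ_i(v_{-i}) is a connected subset of ℝ^Γ. Let f : Θ → Γ be any allocation function, let p be a pricing rule that is IC with respect to f, and let p' be any other pricing rule. Then p' is IC with respect to f if and only if there exist functions h_i : Θ_{-i} → ℝ such that p_i'(v) = p_i(v) + h_i(v_{-i}) for every agent i and every v ∈ Θ. -/
variable {n : ℕ} {Γ : Type*}

/-- The welfare of a type profile: the maximum total value over allocations. -/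
noncomputable def welfare [Fintype Γ] [Nonempty Γ] (v : Fin n → Γ → ℝ) : ℝ :=
  Finset.univ.sup' Finset.univ_nonempty fun γ => ∑ j, v j γ

/-- The typeSlice `Θ_i(v_{-i})`: types for agent `i` consistent with the others' types in `v`. -/
def typeSlice (Θ : Set (Fin n → Γ → ℝ)) (i : Fin n) (v : Fin n → Γ → ℝ) : Set (Γ → ℝ) :=
  {vi | Function.update v i vi ∈ Θ}

/-- `f` depends only on the coordinates other than `i` (i.e. is a function of `v_{-i}`). -/
def IndepOf (i : Fin n) (f : (Fin n → Γ → ℝ) → ℝ) : Prop :=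
  ∀ v v' : Fin n → Γ → ℝ, (∀ j, j ≠ i → v j = v' j) → f v = f v'

/-- Incentive compatibility of a pricing rule `p` w.r.t. allocation function `f`. -/
def IC (Θ : Set (Fin n → Γ → ℝ)) (f : (Fin n → Γ → ℝ) → Γ)
    (p : Fin n → (Fin n → Γ → ℝ) → ℝ) : Prop :=
  ∀ (i : Fin n) (v v' : Fin n → Γ → ℝ), v ∈ Θ → v' ∈ Θ → (∀ j, j ≠ i → v j = v' j) →
    v i (f v) - p i v ≥ v i (f v') - p i v'

/-- Individual rationality of a pricing rule `p` w.r.t. allocation function `f`. -/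
def IR (Θ : Set (Fin n → Γ → ℝ)) (f : (Fin n → Γ → ℝ) → Γ)
    (p : Fin n → (Fin n → Γ → ℝ) → ℝ) : Prop :=
  ∀ (i : Fin n), ∀ v ∈ Θ, v i (f v) - p i v ≥ 0

/-- `Θ_i^α(v_{-i})`: types of agent `i` leading to efficient allocation `α`. -/
def allocSlice (Θ : Set (Fin n → Γ → ℝ)) (αeff : (Fin n → Γ → ℝ) → Γ)
    (i : Fin n) (v : Fin n → Γ → ℝ) (α : Γ) : Set (Γ → ℝ) :=
  {vi | vi ∈ typeSlice Θ i v ∧ αeff (Function.update v i vi) = α}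

/-- The weakest-type pricing rule. -/
noncomputable def pWT [Fintype Γ] [Nonempty Γ] (Θ : Set (Fin n → Γ → ℝ))
    (αeff : (Fin n → Γ → ℝ) → Γ) (i : Fin n) (v : Fin n → Γ → ℝ) : ℝ :=
  sInf ((fun vi => welfare (Function.update v i vi)) '' typeSlice Θ i v)
    - ∑ j ∈ Finset.univ.erase i, v j (αeff v)

/-- The constraints Constr-Γ at `v_{-i}` for a family `(h^α)_{α ∈ Γ}`. -/
def ConstrGamma [Fintype Γ] [Nonempty Γ] (Θ : Set (Fin n → Γ → ℝ))
    (αeff : (Fin n → Γ → ℝ) → Γ) (i : Fin n) (v : Fin n → Γ → ℝ) (h : Γ → ℝ) : Prop :=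
  (∀ α : Γ, ∀ vt ∈ allocSlice Θ αeff i v α, h α ≤ welfare (Function.update v i vt)) ∧
  (∀ α β : Γ, ∀ vt ∈ allocSlice Θ αeff i v α,
    h α - h β ≤ welfare (Function.update v i vt)
      - (vt β + ∑ j ∈ Finset.univ.erase i, v j β))

/-- The constraints Constr-C at `v_{-i}` for a family indexed by connected components. -/
def ConstrC [Fintype Γ] [Nonempty Γ] (Θ : Set (Fin n → Γ → ℝ))
    (αeff : (Fin n → Γ → ℝ) → Γ) (i : Fin n) (v : Fin n → Γ → ℝ)
    (h : Set (Γ → ℝ) → ℝ) : Prop :=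
  (∀ vt ∈ typeSlice Θ i v,
    h (connectedComponentIn (typeSlice Θ i v) vt) ≤ welfare (Function.update v i vt)) ∧
  (∀ vC ∈ typeSlice Θ i v, ∀ vD ∈ typeSlice Θ i v,
    h (connectedComponentIn (typeSlice Θ i v) vC) - h (connectedComponentIn (typeSlice Θ i v) vD)
      ≤ welfare (Function.update v i vC)
        - (vC (αeff (Function.update v i vD))
            + ∑ j ∈ Finset.univ.erase i, v j (αeff (Function.update v i vD))))

theorem key_lemma [Fintype Γ] [Nonempty Γ]
    (Θ : Set (Fin n → Γ → ℝ))
    (hconn : ∀ (i : Fin n) (v : Fin n → Γ → ℝ),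
      (typeSlice Θ i v).Nonempty → IsConnected (typeSlice Θ i v))
    (f : (Fin n → Γ → ℝ) → Γ)
    (p p' : Fin n → (Fin n → Γ → ℝ) → ℝ)
    (hp : IC Θ f p) (hp' : IC Θ f p')
    (i : Fin n) (v v' : Fin n → Γ → ℝ) (hv : v ∈ Θ) (hv' : v' ∈ Θ)
    (hagree : ∀ j, j ≠ i → v j = v' j) :
    p' i v - p i v = p' i v' - p i v' := by
  classical
  set S := typeSlice Θ i v with hS
  have hvi : v i ∈ S := by simp [hS, typeSlice, Function.update_eq_self, hv]
  have hupd' : Function.update v i (v' i) = v' := by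
    funext j
    by_cases hj : j = i
    · subst hj; simp
    · rw [Function.update_of_ne hj, hagree j hj]
  have hvi' : v' i ∈ S := by
    simpa [hS, typeSlice, hupd'] using hv'
  set G : (Γ → ℝ) → ℝ :=
    fun vi => p' i (Function.update v i vi) - p i (Function.update v i vi) with hG
  have sandwich : ∀ vi ∈ S, ∀ vi' ∈ S,
      G vi - G vi' ≤ (vi (f (Function.update v i vi)) - vi' (f (Function.update v i vi)))
        - (vi (f (Function.update v i vi')) - vi' (f (Function.update v i vi'))) := by
    intro vi h1 vi' h2
    have hw : Function.update v i vi ∈ Θ := h1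
    have hw' : Function.update v i vi' ∈ Θ := h2
    have hag : ∀ j, j ≠ i → Function.update v i vi j = Function.update v i vi' j := by
      intro j hj; rw [Function.update_of_ne hj, Function.update_of_ne hj]
    have hag' : ∀ j, j ≠ i → Function.update v i vi' j = Function.update v i vi j :=
      fun j hj => (hag j hj).symm
    have h3 := hp' i _ _ hw hw' hag
    have h4 := hp i _ _ hw' hw hag'
    rw [Function.update_self] at h3
    rw [Function.update_self] at h4
    simp only [hG]
    linarith
  -- constant on equal allocations
  have const_alloc : ∀ vi ∈ S, ∀ vi' ∈ S,
      f (Function.update v i vi) = f (Function.update v i vi') → G vi = G vi' := by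
    intro vi h1 vi' h2 he
    have a1 := sandwich vi h1 vi' h2
    have a2 := sandwich vi' h2 vi h1
    rw [he] at a1 a2
    linarith
  -- continuity
  have hcont : ContinuousOn G S := by
    rw [Metric.continuousOn_iff]
    intro b hb ε hε
    refine ⟨ε / 3, by linarith, fun a ha hab => ?_⟩
    have s1 := sandwich a ha b hb
    have s2 := sandwich b hb a ha
    set A := f (Function.update v i a)
    set B := f (Function.update v i b)
    have dA : |a A - b A| ≤ dist a b := by
      rw [← Real.dist_eq]; exact dist_le_pi_dist a b A
    have dB : |a B - b B| ≤ dist a b := by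
      rw [← Real.dist_eq]; exact dist_le_pi_dist a b B
    obtain ⟨dA1, dA2⟩ := abs_sub_le_iff.mp dA
    obtain ⟨dB1, dB2⟩ := abs_sub_le_iff.mp dB
    rw [Real.dist_eq, abs_sub_lt_iff]
    constructor <;> linarith
  have hSne : S.Nonempty := ⟨v i, hvi⟩
  have hconnS : IsConnected S := hconn i v hSne
  have himg : IsPreconnected (G '' S) := (hconnS.image G hcont).isPreconnected
  -- finiteness of image
  have hfin : (G '' S).Finite := by
    have hsub : G '' S ⊆ Set.range (fun α : Γ =>
        if h : ∃ vi, vi ∈ S ∧ f (Function.update v i vi) = α then G h.choose else 0) := by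
      rintro x ⟨vi, hviS, rfl⟩
      refine ⟨f (Function.update v i vi), ?_⟩
      have hex : ∃ w, w ∈ S ∧ f (Function.update v i w) = f (Function.update v i vi) :=
        ⟨vi, hviS, rfl⟩
      simp only [hex, dif_pos]
      exact const_alloc _ hex.choose_spec.1 _ hviS hex.choose_spec.2
    exact (Set.finite_range _).subset hsub
  -- finite preconnected subset of ℝ is a subsingleton
  have hsub : ∀ x ∈ G '' S, ∀ y ∈ G '' S, x = y := by
    intro x hx y hy
    by_contra hxy
    have hord := himg.ordConnected
    rcases lt_or_gt_of_ne hxy with h | h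
    · exact (Set.Icc_infinite h) (hfin.subset (hord.out hx hy))
    · exact (Set.Icc_infinite h) (hfin.subset (hord.out hy hx))
  have := hsub (G (v i)) ⟨v i, hvi, rfl⟩ (G (v' i)) ⟨v' i, hvi', rfl⟩
  simp only [hG, Function.update_eq_self, hupd'] at this
  exact this

/-- Revenue equivalence on connected type spaces. -/
theorem revenue_equivalence [Fintype Γ] [Nonempty Γ]
    (Θ : Set (Fin n → Γ → ℝ))
    (hconn : ∀ (i : Fin n) (v : Fin n → Γ → ℝ),
      (typeSlice Θ i v).Nonempty → IsConnected (typeSlice Θ i v))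
    (f : (Fin n → Γ → ℝ) → Γ)
    (p p' : Fin n → (Fin n → Γ → ℝ) → ℝ)
    (hp : IC Θ f p) :
    IC Θ f p' ↔
      ∃ h : Fin n → (Fin n → Γ → ℝ) → ℝ,
        (∀ i, IndepOf i (h i)) ∧ ∀ i : Fin n, ∀ v ∈ Θ, p' i v = p i v + h i v := by
    classical
  constructor
  · intro hp'
    refine ⟨fun i v => sInf {c | ∃ vi, Function.update v i vi ∈ Θ ∧
        c = p' i (Function.update v i vi) - p i (Function.update v i vi)}, ?_, ?_⟩
    · intro i v v' hagree
      have hupd : ∀ vi : Γ → ℝ, Function.update v i vi = Function.update v' i vi := by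
        intro vi; funext j
        by_cases hj : j = i
        · subst hj; simp
        · rw [Function.update_of_ne hj, Function.update_of_ne hj, hagree j hj]
      simp_rw [hupd]
    · intro i v hv
      have hset : {c | ∃ vi, Function.update v i vi ∈ Θ ∧
          c = p' i (Function.update v i vi) - p i (Function.update v i vi)}
          = {p' i v - p i v} := by
        ext c
        constructor
        · rintro ⟨vi, hmem, rfl⟩
          have hag : ∀ j, j ≠ i → Function.update v i vi j = v j := by
            intro j hj; rw [Function.update_of_ne hj]
          have := key_lemma Θ hconn f p p' hp hp' i _ v hmem hv hag
          simp [this]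
        · rintro rfl
          exact ⟨v i, by simp [Function.update_eq_self, hv]⟩
      beta_reduce
      rw [hset, csInf_singleton]
      ring
  · rintro ⟨h, hind, heq⟩ i v v' hv hv' hagree
    have h1 := hp i v v' hv hv' hagree
    have h2 : h i v = h i v' := hind i v v' hagree
    rw [heq i v hv, heq i v' hv']
    linarith
end

section
/- Uniqueness of Groves mechanisms: Suppose that for every agent i and every v_{-i} ∈ Θ_{-i}, the slice Θ_i(v_{-i}) is a connected subset of ℝ^Γ, and let p be a pricing rule. Then p is IC if and only if there exist functions h_i : Θ_{-i} → ℝ such that p_i(v) = h_i(v_{-i}) − Σ_{j≠i} v_j(α^eff(v)) for every agent i and every v ∈ Θ; that is, the only efficient IC mechanisms on connected type spaces are Groves mechanisms. -/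
variable {n : ℕ} {Γ : Type*}

section GrovesAux

open Finset

lemma sum_update_eval [Fintype Γ] (v : Fin n → Γ → ℝ) (i : Fin n) (x : Γ → ℝ) (β : Γ) :
    ∑ j, Function.update v i x j β = x β + ∑ j ∈ Finset.univ.erase i, v j β := by
  rw [← Finset.sum_erase_add _ _ (Finset.mem_univ i), Function.update_self, add_comm]
  congr 1
  refine Finset.sum_congr rfl fun j hj => ?_
  rw [Function.update_of_ne (Finset.mem_erase.1 hj).1]

lemma continuous_fsup' {ι X : Type*} [TopologicalSpace X] (s : Finset ι) (hs : s.Nonempty)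
    (f : ι → X → ℝ) (hf : ∀ i, Continuous (f i)) :
    Continuous fun x => s.sup' hs fun i => f i x := by
  have : Continuous (s.sup' hs f) := Continuous.finset_sup' hs fun i _ => hf i
  convert this using 1
  ext x
  rw [Finset.sup'_apply]

lemma finite_preconnected_subsingleton {s : Set ℝ} (hc : IsPreconnected s) (hf : s.Finite) :
    s.Subsingleton := by
  intro a ha b hb
  by_contra hne
  rcases lt_or_gt_of_ne hne with hlt | hlt
  · exact ((Set.Icc_infinite hlt).mono (hc.ordConnected.out ha hb)) hf
  · exact ((Set.Icc_infinite hlt).mono (hc.ordConnected.out hb ha)) hf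

lemma groves_key [Fintype Γ] [Nonempty Γ]
    (Θ : Set (Fin n → Γ → ℝ)) (αeff : (Fin n → Γ → ℝ) → Γ)
    (heff : ∀ v : Fin n → Γ → ℝ, ∑ j, v j (αeff v) = welfare v)
    (hconn : ∀ (i : Fin n) (v : Fin n → Γ → ℝ),
      (typeSlice Θ i v).Nonempty → IsConnected (typeSlice Θ i v))
    (p : Fin n → (Fin n → Γ → ℝ) → ℝ) (hic : IC Θ αeff p)
    (i : Fin n) (v : Fin n → Γ → ℝ) {x y : Γ → ℝ}
    (hx : x ∈ typeSlice Θ i v) (hy : y ∈ typeSlice Θ i v) :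
    p i (Function.update v i x)
        + ∑ j ∈ Finset.univ.erase i, v j (αeff (Function.update v i x)) =
      p i (Function.update v i y)
        + ∑ j ∈ Finset.univ.erase i, v j (αeff (Function.update v i y)) := by
  classical
  set S := typeSlice Θ i v with hS
  set U : (Γ → ℝ) → (Fin n → Γ → ℝ) := fun z => Function.update v i z with hU
  set al : (Γ → ℝ) → Γ := fun z => αeff (U z) with hal
  set Svl : (Γ → ℝ) → Γ → ℝ := fun z β => z β + ∑ j ∈ Finset.univ.erase i, v j β with hSvl
  set F : (Γ → ℝ) → ℝ := fun z => p i (U z) + ∑ j ∈ Finset.univ.erase i, v j (al z) with hF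
  have hmem : ∀ z ∈ S, U z ∈ Θ := fun z hz => hz
  have hwelf : ∀ z : Γ → ℝ, welfare (U z) = Finset.univ.sup' Finset.univ_nonempty (Svl z) := by
    intro z
    unfold welfare
    exact Finset.sup'_congr _ rfl fun β _ => sum_update_eval v i z β
  have halmem : ∀ z : Γ → ℝ, Svl z (al z) = welfare (U z) := by
    intro z
    rw [← heff (U z)]
    simp only [hSvl, hal, hU]
    rw [sum_update_eval]
  have key_ic : ∀ z ∈ S, ∀ z' ∈ S, welfare (U z) - F z ≥ Svl z (al z') - F z' := by
    intro z hz z' hz'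
    have hagr : ∀ j, j ≠ i → U z j = U z' j := by
      intro j hj
      simp only [hU, Function.update_of_ne hj]
    have h1 := hic i (U z) (U z') (hmem z hz) (hmem z' hz') hagr
    have h2 : (U z) i = z := Function.update_self i z v
    rw [h2] at h1
    have h3 : welfare (U z) - F z = z (al z) - p i (U z) := by
      rw [← halmem z]; simp only [hSvl, hF]; ring
    have h4 : Svl z (al z') - F z' = z (al z') - p i (U z') := by
      simp only [hSvl, hF]; ring
    rw [h3, h4]
    exact h1
  have taxation : ∀ z ∈ S, ∀ z' ∈ S, al z = al z' → F z = F z' := by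
    intro z hz z' hz' hzz
    have h1 := key_ic z hz z' hz'
    have h2 := key_ic z' hz' z hz
    rw [← hzz, halmem z] at h1
    rw [hzz, halmem z'] at h2
    linarith
  -- representatives
  set w : Γ → Γ → ℝ := fun β => if h : ∃ z ∈ S, al z = β then h.choose else x with hw
  set A : Finset Γ := Finset.univ.filter (fun β => w β ∈ S ∧ al (w β) = β) with hAdef
  have hwspec : ∀ β ∈ A, w β ∈ S ∧ al (w β) = β := by
    intro β hβ
    exact (Finset.mem_filter.1 hβ).2
  have halA : ∀ z ∈ S, al z ∈ A ∧ F (w (al z)) = F z := by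
    intro z hz
    have hex : ∃ z' ∈ S, al z' = al z := ⟨z, hz, rfl⟩
    have hwz : w (al z) = hex.choose := by rw [hw]; exact dif_pos hex
    obtain ⟨hc1, hc2⟩ := hex.choose_spec
    have hmemA : al z ∈ A := by
      rw [hAdef, Finset.mem_filter]
      exact ⟨Finset.mem_univ _, by rw [hwz]; exact ⟨hc1, hc2⟩⟩
    exact ⟨hmemA, taxation _ (by rw [hwz]; exact hc1) z hz (by rw [hwz, hc2])⟩
  set g : Γ → ℝ := fun β => F (w β) with hg
  have hA : A.Nonempty := ⟨al x, (halA x hx).1⟩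
  -- envelope formula
  set Fc : (Γ → ℝ) → ℝ := fun z =>
    (Finset.univ.sup' Finset.univ_nonempty (Svl z)) - A.sup' hA (fun β => Svl z β - g β)
    with hFc
  have henv : ∀ z ∈ S, F z = Fc z := by
    intro z hz
    have h1 : A.sup' hA (fun β => Svl z β - g β) = welfare (U z) - F z := by
      apply le_antisymm
      · apply Finset.sup'_le
        intro β hβ
        obtain ⟨hw1, hw2⟩ := hwspec β hβ
        have := key_ic z hz (w β) hw1
        rw [hw2] at this
        simpa [hg] using this
      · have hmemA := (halA z hz).1
        have := Finset.le_sup' (fun β => Svl z β - g β) hmemA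
        calc welfare (U z) - F z = Svl z (al z) - g (al z) := by
              have hgz : g (al z) = F z := (halA z hz).2
              rw [halmem z, hgz]
          _ ≤ A.sup' hA (fun β => Svl z β - g β) := this
    rw [hFc]
    dsimp only
    rw [h1, ← hwelf z]
    ring
  have hcont : Continuous Fc := by
    rw [hFc]
    apply Continuous.sub
    · apply continuous_fsup'
      intro β
      show Continuous fun x : Γ → ℝ => x β + ∑ j ∈ Finset.univ.erase i, v j β
      exact (continuous_apply β).add continuous_const
    · apply continuous_fsup'
      intro β
      show Continuous fun x : Γ → ℝ =>
        (x β + ∑ j ∈ Finset.univ.erase i, v j β) - g β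
      exact ((continuous_apply β).add continuous_const).sub continuous_const
  have hfin : (Fc '' S).Finite := by
    apply Set.Finite.subset (A.image g).finite_toSet
    rintro _ ⟨z, hz, rfl⟩
    rw [← henv z hz]
    obtain ⟨h1, h2⟩ := halA z hz
    exact Finset.mem_coe.2 (Finset.mem_image.2 ⟨al z, h1, h2⟩)
  have hconnS : IsConnected S := hconn i v ⟨x, hx⟩
  have himg : IsPreconnected (Fc '' S) :=
    hconnS.isPreconnected.image Fc hcont.continuousOn
  have hsub := finite_preconnected_subsingleton himg hfin
  have hFxy : F x = F y := by
    rw [henv x hx, henv y hy]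
    exact hsub ⟨x, hx, rfl⟩ ⟨y, hy, rfl⟩
  exact hFxy

end GrovesAux

/-- Uniqueness of Groves mechanisms on connected type spaces. -/
theorem groves_uniqueness [Fintype Γ] [Nonempty Γ]
    (Θ : Set (Fin n → Γ → ℝ))
    (αeff : (Fin n → Γ → ℝ) → Γ)
    (heff : ∀ v : Fin n → Γ → ℝ, ∑ j, v j (αeff v) = welfare v)
    (hconn : ∀ (i : Fin n) (v : Fin n → Γ → ℝ),
      (typeSlice Θ i v).Nonempty → IsConnected (typeSlice Θ i v))
    (p : Fin n → (Fin n → Γ → ℝ) → ℝ) :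
    IC Θ αeff p ↔
      ∃ h : Fin n → (Fin n → Γ → ℝ) → ℝ,
        (∀ i, IndepOf i (h i)) ∧
        ∀ i : Fin n, ∀ v ∈ Θ,
          p i v = h i v - ∑ j ∈ Finset.univ.erase i, v j (αeff v) := by
  constructor
  · intro hic
    classical
    refine ⟨fun i w =>
      if hne : (typeSlice Θ i w).Nonempty then
        p i (Function.update w i hne.some)
          + ∑ j ∈ Finset.univ.erase i, w j (αeff (Function.update w i hne.some))
      else 0, ?_, ?_⟩
    · intro i v v' hvv'
      have hupd : ∀ z : Γ → ℝ, Function.update v i z = Function.update v' i z := by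
        intro z; funext j
        by_cases hj : j = i
        · subst hj; simp
        · rw [Function.update_of_ne hj, Function.update_of_ne hj, hvv' j hj]
      have hsl : typeSlice Θ i v = typeSlice Θ i v' := by
        ext z; simp only [typeSlice, Set.mem_setOf_eq, hupd z]
      by_cases hne : (typeSlice Θ i v).Nonempty
      · have hne' : (typeSlice Θ i v').Nonempty := hsl ▸ hne
        beta_reduce
        rw [dif_pos hne, dif_pos hne']
        have hx : hne.some ∈ typeSlice Θ i v := hne.some_mem
        have hy : hne'.some ∈ typeSlice Θ i v := by rw [hsl]; exact hne'.some_mem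
        have hkey := groves_key Θ αeff heff hconn p hic i v hx hy
        rw [hkey, ← hupd hne'.some]
        congr 1
        exact Finset.sum_congr rfl fun j hj => by rw [hvv' j (Finset.mem_erase.1 hj).1]
      · have hne' : ¬(typeSlice Θ i v').Nonempty := hsl ▸ hne
        beta_reduce
        rw [dif_neg hne, dif_neg hne']
    · intro i v hv
      have hvi : v i ∈ typeSlice Θ i v := by
        simp only [typeSlice, Set.mem_setOf_eq, Function.update_eq_self]; exact hv
      have hne : (typeSlice Θ i v).Nonempty := ⟨v i, hvi⟩
      beta_reduce
      rw [dif_pos hne]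
      have hkey := groves_key Θ αeff heff hconn p hic i v hvi hne.some_mem
      rw [Function.update_eq_self] at hkey
      linarith
  · rintro ⟨h, hind, hp⟩ i v v' hv hv' hagr
    rw [hp i v hv, hp i v' hv']
    have h1 : h i v' = h i v := hind i v' v fun j hj => (hagr j hj).symm
    have h2 : ∑ j ∈ Finset.univ.erase i, v j (αeff v) + v i (αeff v) = ∑ j, v j (αeff v) :=
      Finset.sum_erase_add _ _ (Finset.mem_univ i)
    have h3 : ∑ j ∈ Finset.univ.erase i, v j (αeff v') + v i (αeff v')
        = ∑ j, v j (αeff v') :=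
      Finset.sum_erase_add _ _ (Finset.mem_univ i)
    have h4 : ∑ j ∈ Finset.univ.erase i, v' j (αeff v')
        = ∑ j ∈ Finset.univ.erase i, v j (αeff v') :=
      Finset.sum_congr rfl fun j hj => by rw [hagr j (Finset.mem_erase.1 hj).1]
    have h5 : ∑ j, v j (αeff v') ≤ welfare v :=
      Finset.le_sup' (fun γ => ∑ j, v j γ) (Finset.mem_univ (αeff v'))
    have h6 := heff v
    rw [h1, h4]
    linarith
end

section
/- Optimality of the weakest-type mechanism on connected type spaces: Suppose that for every agent i and every v_{-i} ∈ Θ_{-i}, the slice Θ_i(v_{-i}) is a connected subset of ℝ^Γ and the set {w(ṽ_i, v_{-i}) : ṽ_i ∈ Θ_i(v_{-i})} is bounded below. Let p be any IC and IR pricing rule. Then p_i(v) ≤ p_i^WT(v) for every agent i and every v ∈ Θ. -/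
variable {n : ℕ} {Γ : Type*}

/-- Optimality of the weakest-type mechanism on connected type spaces. -/
theorem weakest_type_optimal [Fintype Γ] [Nonempty Γ]
    (Θ : Set (Fin n → Γ → ℝ))
    (αeff : (Fin n → Γ → ℝ) → Γ)
    (heff : ∀ v : Fin n → Γ → ℝ, ∑ j, v j (αeff v) = welfare v)
    (hconn : ∀ (i : Fin n) (v : Fin n → Γ → ℝ),
      (typeSlice Θ i v).Nonempty → IsConnected (typeSlice Θ i v))
    (hbdd : ∀ (i : Fin n) (v : Fin n → Γ → ℝ), (typeSlice Θ i v).Nonempty →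
      BddBelow ((fun vi => welfare (Function.update v i vi)) '' typeSlice Θ i v))
    (p : Fin n → (Fin n → Γ → ℝ) → ℝ)
    (hIC : IC Θ αeff p) (hIR : IR Θ αeff p) :
    ∀ i : Fin n, ∀ v ∈ Θ, p i v ≤ pWT Θ αeff i v := by
  classical
  intro i v hv
  set S := typeSlice Θ i v with hSdef
  set V : (Γ → ℝ) → (Fin n → Γ → ℝ) := fun x => Function.update v i x with hVdef
  have hVv : V (v i) = v := Function.update_eq_self i v
  have hviS : v i ∈ S := by
    simp only [hSdef, typeSlice, Set.mem_setOf_eq, Function.update_eq_self]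
    exact hv
  have hmem : ∀ x ∈ S, V x ∈ Θ := fun x hx => hx
  have hVne : ∀ (x : Γ → ℝ) (j : Fin n), j ≠ i → V x j = v j := by
    intro x j hj; exact Function.update_of_ne hj _ _
  have hVne' : ∀ (x y : Γ → ℝ) (j : Fin n), j ≠ i → V x j = V y j := by
    intro x y j hj; rw [hVne x j hj, hVne y j hj]
  set c₀ : Γ → ℝ := fun γ => ∑ j ∈ Finset.univ.erase i, v j γ with hc₀def
  have hsum : ∀ (x : Γ → ℝ) (γ : Γ), ∑ j, V x j γ = x γ + c₀ γ := by
    intro x γ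
    rw [← Finset.add_sum_erase Finset.univ (fun j => V x j γ) (Finset.mem_univ i)]
    congr 1
    · simp [hVdef]
    · exact Finset.sum_congr rfl fun j hj => by
        rw [hVne x j (Finset.ne_of_mem_erase hj)]
  -- step A : prices agree on allocation classes
  have stepA : ∀ x ∈ S, ∀ y ∈ S, αeff (V x) = αeff (V y) → p i (V x) = p i (V y) := by
    intro x hx y hy hxy
    have h1 := hIC i (V x) (V y) (hmem x hx) (hmem y hy) (hVne' x y)
    have h2 := hIC i (V y) (V x) (hmem y hy) (hmem x hx) (hVne' y x)
    have hvx : V x i = x := Function.update_self i x v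
    have hvy : V y i = y := Function.update_self i y v
    rw [hvx, hxy] at h1
    rw [hvy, ← hxy] at h2
    linarith
  -- the realized allocation classes
  set A : Finset Γ := Finset.univ.filter
      (fun α => ∃ x ∈ S, αeff (V x) = α) with hAdef
  have hmemA : ∀ x ∈ S, αeff (V x) ∈ A := by
    intro x hx
    simp only [hAdef, Finset.mem_filter, Finset.mem_univ, true_and]
    exact ⟨x, hx, rfl⟩
  have hA : A.Nonempty := ⟨αeff (V (v i)), hmemA _ hviS⟩
  -- class prices
  set c : Γ → ℝ := fun α =>
    if h : ∃ x ∈ S, αeff (V x) = α then p i (V h.choose) else 0 with hcdef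
  have hc : ∀ x ∈ S, c (αeff (V x)) = p i (V x) := by
    intro x hx
    have h : ∃ y ∈ S, αeff (V y) = αeff (V x) := ⟨x, hx, rfl⟩
    simp only [hcdef, dif_pos h]
    obtain ⟨hy, hxy⟩ := h.choose_spec
    exact stepA _ hy _ hx hxy
  set U : (Γ → ℝ) → ℝ := fun x => A.sup' hA (fun α => x α - c α) with hUdef
  set W : (Γ → ℝ) → ℝ := fun x =>
    Finset.univ.sup' Finset.univ_nonempty (fun γ => x γ + c₀ γ) with hWdef
  have hW : ∀ x : Γ → ℝ, welfare (V x) = W x := by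
    intro x
    exact Finset.sup'_congr _ rfl (fun γ _ => hsum x γ)
  have hU : ∀ x ∈ S, U x = x (αeff (V x)) - p i (V x) := by
    intro x hx
    apply le_antisymm
    · apply Finset.sup'_le
      intro α hα
      simp only [hAdef, Finset.mem_filter, Finset.mem_univ, true_and] at hα
      obtain ⟨y, hy, hyα⟩ := hα
      have h1 := hIC i (V x) (V y) (hmem x hx) (hmem y hy) (hVne' x y)
      have hvx : V x i = x := Function.update_self i x v
      rw [hvx, hyα] at h1
      have hcy : c α = p i (V y) := by rw [← hyα]; exact hc y hy
      linarith
    · have := Finset.le_sup' (fun α => x α - c α) (hmemA x hx)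
      rw [hc x hx] at this
      exact this
  set F : (Γ → ℝ) → ℝ := fun x => W x - U x with hFdef
  have hFval : ∀ x ∈ S, F x = c (αeff (V x)) + c₀ (αeff (V x)) := by
    intro x hx
    have h1 : W x = x (αeff (V x)) + c₀ (αeff (V x)) := by
      rw [← hW, ← heff (V x), hsum]
    simp only [hFdef, h1, hU x hx, hc x hx]
    ring
  -- F is continuous
  have hWc : Continuous W := by
    apply Continuous.finset_sup'_apply Finset.univ_nonempty
    intro γ _
    exact (continuous_apply γ).add continuous_const
  have hUc : Continuous U := by
    apply Continuous.finset_sup'_apply hA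
    intro α _
    exact (continuous_apply α).sub continuous_const
  have hFc : Continuous F := hWc.sub hUc
  -- F is constant on S
  have hFconst : ∀ x ∈ S, ∀ y ∈ S, F x = F y := by
    have key : ∀ x ∈ S, ∀ y ∈ S, F x ≤ F y → F x = F y := by
      intro x hx y hy hle
      by_contra hne
      have hlt : F x < F y := lt_of_le_of_ne hle hne
      have hpre : IsPreconnected S := (hconn i v ⟨v i, hviS⟩).isPreconnected
      have hsub : Set.Icc (F x) (F y) ⊆ F '' S :=
        hpre.intermediate_value hx hy hFc.continuousOn
      have hfin : (F '' S).Finite := by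
        apply Set.Finite.subset (Set.finite_range (fun α => c α + c₀ α))
        rintro _ ⟨z, hz, rfl⟩
        exact ⟨αeff (V z), (hFval z hz).symm⟩
      exact Set.Icc_infinite hlt (hfin.subset hsub)
    intro x hx y hy
    rcases le_total (F x) (F y) with h | h
    · exact key x hx y hy h
    · exact (key y hy x hx h).symm
  -- F x ≤ welfare (V x) for x ∈ S, by IR
  have hFle : ∀ x ∈ S, F x ≤ welfare (V x) := by
    intro x hx
    have hir := hIR i (V x) (hmem x hx)
    have hvx : V x i = x := Function.update_self i x v
    rw [hvx] at hir
    rw [hW, hFdef]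
    simp only
    rw [hU x hx]
    linarith
  -- F (v i) equals the payment side
  have hFvi : F (v i) = p i v + c₀ (αeff v) := by
    have h1 : W (v i) = v i (αeff v) + c₀ (αeff v) := by
      rw [← hW, hVv, ← heff v]
      have := hsum (v i) (αeff v)
      rw [hVv] at this
      rw [this]
    have h2 : U (v i) = v i (αeff v) - p i v := by
      have := hU (v i) hviS
      rw [hVv] at this
      exact this
    simp only [hFdef, h1, h2]
    ring
  -- conclude
  rw [pWT]
  rw [le_sub_iff_add_le]
  apply le_csInf
  · exact ⟨welfare (V (v i)), ⟨v i, hviS, rfl⟩⟩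
  · rintro b ⟨y, hy, rfl⟩
    calc p i v + ∑ j ∈ Finset.univ.erase i, v j (αeff v)
        = F (v i) := hFvi.symm
      _ = F y := hFconst _ hviS _ hy
      _ ≤ welfare (V y) := hFle y hy
end

section
/- The weakest-type mechanism is IC and IR for arbitrary (not necessarily connected) type spaces: Suppose that for every agent i and every v_{-i} ∈ Θ_{-i}, the set {w(ṽ_i, v_{-i}) : ṽ_i ∈ Θ_i(v_{-i})} is bounded below. Then the pricing rule p^WT is both IC and IR. -/
variable {n : ℕ} {Γ : Type*}

/-- The weakest-type mechanism is IC and IR for arbitrary type spaces. -/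
theorem weakest_type_IC_IR [Fintype Γ] [Nonempty Γ]
    (Θ : Set (Fin n → Γ → ℝ))
    (αeff : (Fin n → Γ → ℝ) → Γ)
    (heff : ∀ v : Fin n → Γ → ℝ, ∑ j, v j (αeff v) = welfare v)
    (hbdd : ∀ (i : Fin n) (v : Fin n → Γ → ℝ), (typeSlice Θ i v).Nonempty →
      BddBelow ((fun vi => welfare (Function.update v i vi)) '' typeSlice Θ i v)) :
    IC Θ αeff (pWT Θ αeff) ∧ IR Θ αeff (pWT Θ αeff) := by
  have hupd : ∀ (i : Fin n) (v v' : Fin n → Γ → ℝ), (∀ j, j ≠ i → v j = v' j) →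
      ∀ vi, Function.update v i vi = Function.update v' i vi := by
    intro i v v' h vi
    funext j
    by_cases hj : j = i
    · subst hj; simp
    · simp [Function.update_of_ne hj, h j hj]
  have hslice : ∀ (i : Fin n) (v v' : Fin n → Γ → ℝ), (∀ j, j ≠ i → v j = v' j) →
      typeSlice Θ i v = typeSlice Θ i v' := by
    intro i v v' h
    ext vi
    simp only [typeSlice, Set.mem_setOf_eq, hupd i v v' h vi]
  have key : ∀ (i : Fin n) (v : Fin n → Γ → ℝ), v ∈ Θ →
      sInf ((fun vi => welfare (Function.update v i vi)) '' typeSlice Θ i v) ≤ welfare v := by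
    intro i v hv
    have hmem : v i ∈ typeSlice Θ i v := by
      simpa [typeSlice, Function.update_eq_self] using hv
    have hw : welfare v ∈ (fun vi => welfare (Function.update v i vi)) '' typeSlice Θ i v := by
      exact ⟨v i, hmem, by simp [Function.update_eq_self]⟩
    exact csInf_le (hbdd i v ⟨v i, hmem⟩) hw
  constructor
  · intro i v v' hv hv' hagree
    have hsum : ∀ u : Fin n → Γ → ℝ, ∀ γ,
        u i γ + ∑ j ∈ Finset.univ.erase i, u j γ = ∑ j, u j γ :=
      fun u γ => Finset.add_sum_erase _ (fun j => u j γ) (Finset.mem_univ i)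
    have hsliceEq := hslice i v v' hagree
    have himg : (fun vi => welfare (Function.update v i vi)) '' typeSlice Θ i v
        = (fun vi => welfare (Function.update v' i vi)) '' typeSlice Θ i v' := by
      have hfun : (fun vi => welfare (Function.update v i vi))
          = (fun vi : Γ → ℝ => welfare (Function.update v' i vi)) := by
        funext vi
        rw [hupd i v v' hagree vi]
      rw [← hsliceEq, hfun]
    have hsum' : ∑ j ∈ Finset.univ.erase i, v' j (αeff v')
        = ∑ j ∈ Finset.univ.erase i, v j (αeff v') := by
      refine Finset.sum_congr rfl fun j hj => ?_
      rw [hagree j (Finset.ne_of_mem_erase hj)]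
    unfold pWT
    rw [himg, hsum']
    have h1 : ∑ j, v j (αeff v') ≤ welfare v :=
      Finset.le_sup' (fun γ => ∑ j, v j γ) (Finset.mem_univ (αeff v'))
    have h2 : ∑ j, v j (αeff v) = welfare v := heff v
    have e1 := hsum v (αeff v)
    have e2 := hsum v (αeff v')
    linarith
  · intro i v hv
    have h2 : ∑ j, v j (αeff v) = welfare v := heff v
    have e1 : v i (αeff v) + ∑ j ∈ Finset.univ.erase i, v j (αeff v) = ∑ j, v j (αeff v) :=
      Finset.add_sum_erase _ (fun j => v j (αeff v)) (Finset.mem_univ i)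
    have hk := key i v hv
    unfold pWT
    linarith
end

section
/- Every IC pricing rule is an allocation-wise Groves mechanism: if p is an IC pricing rule, then there exist functions h_i^α : Θ_{-i} → ℝ (one per agent i and allocation α ∈ Γ) such that p_i(v) = h_i^{α^eff(v)}(v_{-i}) − Σ_{j≠i} v_j(α^eff(v)) for every agent i and every v ∈ Θ. -/
variable {n : ℕ} {Γ : Type*}

/-- Every IC pricing rule is an allocation-wise Groves mechanism. -/
theorem IC_is_allocationwise_groves [Fintype Γ] [Nonempty Γ]
    (Θ : Set (Fin n → Γ → ℝ))
    (αeff : (Fin n → Γ → ℝ) → Γ)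
    (heff : ∀ v : Fin n → Γ → ℝ, ∑ j, v j (αeff v) = welfare v)
    (p : Fin n → (Fin n → Γ → ℝ) → ℝ)
    (hp : IC Θ αeff p) :
    ∃ h : Fin n → Γ → (Fin n → Γ → ℝ) → ℝ,
      (∀ (i : Fin n) (α : Γ), IndepOf i (h i α)) ∧
      ∀ i : Fin n, ∀ v ∈ Θ,
        p i v = h i (αeff v) v - ∑ j ∈ Finset.univ.erase i, v j (αeff v) := by
  classical
  -- key: p i is constant on agreeing profiles with same efficient allocation
  have key : ∀ (i : Fin n) (v w : Fin n → Γ → ℝ), v ∈ Θ → w ∈ Θ →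
      (∀ j, j ≠ i → v j = w j) → αeff v = αeff w → p i v = p i w := by
    intro i v w hv hw hagree hα
    have h1 := hp i v w hv hw hagree
    have h2 := hp i w v hw hv (fun j hj => (hagree j hj).symm)
    rw [hα] at h1 h2
    linarith
  set S : Fin n → Γ → (Fin n → Γ → ℝ) → Set (Fin n → Γ → ℝ) :=
    fun i α v => {w | w ∈ Θ ∧ (∀ j, j ≠ i → w j = v j) ∧ αeff w = α} with hS
  set g : Fin n → Γ → Set (Fin n → Γ → ℝ) → ℝ := fun i α s =>
    if hne : s.Nonempty then p i hne.choose + ∑ j ∈ Finset.univ.erase i, hne.choose j α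
    else 0 with hg
  refine ⟨fun i α v => g i α (S i α v), ?_, ?_⟩
  · intro i α v v' hagree
    have hSeq : S i α v = S i α v' := by
      ext w
      simp only [hS, Set.mem_setOf_eq]
      constructor
      · rintro ⟨h1, h2, h3⟩
        exact ⟨h1, fun j hj => (h2 j hj).trans (hagree j hj), h3⟩
      · rintro ⟨h1, h2, h3⟩
        exact ⟨h1, fun j hj => (h2 j hj).trans (hagree j hj).symm, h3⟩
    show g i α (S i α v) = g i α (S i α v')
    rw [hSeq]
  · intro i v hv
    have hne : (S i (αeff v) v).Nonempty := ⟨v, hv, fun _ _ => rfl, rfl⟩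
    simp only [hg, dif_pos hne]
    obtain ⟨hwΘ, hwag, hwα⟩ := hne.choose_spec
    have hpe : p i v = p i hne.choose :=
      key i v hne.choose hv hwΘ (fun j hj => (hwag j hj).symm) (by rw [hwα])
    have hsum : ∑ j ∈ Finset.univ.erase i, hne.choose j (αeff v)
        = ∑ j ∈ Finset.univ.erase i, v j (αeff v) := by
      refine Finset.sum_congr rfl fun j hj => ?_
      rw [hwag j (Finset.mem_erase.mp hj).1]
    rw [hpe, hsum]
    ring
end

section
/- Allocational characterization of IC and IR pricing rules: a pricing rule p is IC and IR if and only if there exist functions h_i^α : Θ_{-i} → ℝ such that p is the allocation-wise Groves pricing rule given by (h_i^α) and, for every agent i and every v_{-i} ∈ Θ_{-i}, the family (h_i^α(v_{-i}))_{α∈Γ} satisfies Constr-Γ at v_{-i}. -/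
variable {n : ℕ} {Γ : Type*}

section Aux
open scoped Classical

variable (Θ : Set (Fin n → Γ → ℝ)) (αeff : (Fin n → Γ → ℝ) → Γ)
  (p : Fin n → (Fin n → Γ → ℝ) → ℝ) (i : Fin n)

lemma sum_update (v : Fin n → Γ → ℝ) (vt : Γ → ℝ) (γ : Γ) :
    ∑ j, Function.update v i vt j γ = vt γ + ∑ j ∈ Finset.univ.erase i, v j γ := by
  rw [← Finset.add_sum_erase _ _ (Finset.mem_univ i), Function.update_self]
  congr 1
  exact Finset.sum_congr rfl fun j hj =>
    congrFun (Function.update_of_ne (Finset.ne_of_mem_erase hj) _ _) γ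

lemma welfare_le (u : Fin n → Γ → ℝ) [Fintype Γ] [Nonempty Γ] (γ : Γ) :
    ∑ j, u j γ ≤ welfare u :=
  Finset.le_sup' (fun γ => ∑ j, u j γ) (Finset.mem_univ γ)

/-- Auxiliary: the canonical Groves `h`-value on a nonempty allocation slice. -/
noncomputable def gAux (v : Fin n → Γ → ℝ) (α : Γ) : ℝ :=
  if hα : (allocSlice Θ αeff i v α).Nonempty
  then p i (Function.update v i hα.choose) + ∑ j ∈ Finset.univ.erase i, v j α
  else 0

/-- Auxiliary: the full family of `h`-values, with a large value on empty slices. -/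
noncomputable def hAux (α : Γ) (v : Fin n → Γ → ℝ) : ℝ :=
  if (allocSlice Θ αeff i v α).Nonempty then gAux Θ αeff p i v α
  else sSup (gAux Θ αeff p i v '' {α' | (allocSlice Θ αeff i v α').Nonempty})

lemma p_welldef (hIC : IC Θ αeff p) (v : Fin n → Γ → ℝ) (α : Γ) (vt vs : Γ → ℝ)
    (ht : vt ∈ allocSlice Θ αeff i v α) (hs : vs ∈ allocSlice Θ αeff i v α) :
    p i (Function.update v i vt) = p i (Function.update v i vs) := by
  set ut := Function.update v i vt with hut
  set us := Function.update v i vs with hus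
  have hagree : ∀ j, j ≠ i → ut j = us j := fun j hj => by
    rw [hut, hus, Function.update_of_ne hj, Function.update_of_ne hj]
  have h1 := hIC i ut us ht.1 hs.1 hagree
  have h2 := hIC i us ut hs.1 ht.1 fun j hj => (hagree j hj).symm
  rw [hut, hus] at h1 h2
  simp only [Function.update_self, ht.2, hs.2] at h1 h2
  linarith

lemma gAux_val (hIC : IC Θ αeff p) (v : Fin n → Γ → ℝ) (α : Γ) (vt : Γ → ℝ)
    (ht : vt ∈ allocSlice Θ αeff i v α) :
    gAux Θ αeff p i v α = p i (Function.update v i vt) + ∑ j ∈ Finset.univ.erase i, v j α := by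
  have hne : (allocSlice Θ αeff i v α).Nonempty := ⟨vt, ht⟩
  rw [gAux, dif_pos hne, p_welldef Θ αeff p i hIC v α hne.choose vt hne.choose_spec ht]

end Aux

/-- Allocational characterization of IC and IR pricing rules. -/
theorem IC_IR_iff_allocationwise_groves_constr [Fintype Γ] [Nonempty Γ]
    (Θ : Set (Fin n → Γ → ℝ))
    (αeff : (Fin n → Γ → ℝ) → Γ)
    (heff : ∀ v : Fin n → Γ → ℝ, ∑ j, v j (αeff v) = welfare v)
    (p : Fin n → (Fin n → Γ → ℝ) → ℝ) :
    (IC Θ αeff p ∧ IR Θ αeff p) ↔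
      ∃ h : Fin n → Γ → (Fin n → Γ → ℝ) → ℝ,
        (∀ (i : Fin n) (α : Γ), IndepOf i (h i α)) ∧
        (∀ i : Fin n, ∀ v ∈ Θ,
          p i v = h i (αeff v) v - ∑ j ∈ Finset.univ.erase i, v j (αeff v)) ∧
        (∀ (i : Fin n) (v : Fin n → Γ → ℝ), (typeSlice Θ i v).Nonempty →
          ConstrGamma Θ αeff i v (fun α => h i α v)) := by
  classical
  have hself : ∀ (i : Fin n) (v : Fin n → Γ → ℝ), v ∈ Θ →
      v i ∈ allocSlice Θ αeff i v (αeff v) := by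
    intro i v hv
    refine ⟨?_, ?_⟩ <;> simp [typeSlice, Function.update_eq_self, hv]
  constructor
  · rintro ⟨hIC, hIR⟩
    -- helper congruence lemmas for the masked profile
    have hmu : ∀ (i : Fin n) (v : Fin n → Γ → ℝ),
        Function.update (Function.update v i 0) i = Function.update v i := by
      intro i v; funext vt; exact Function.update_idem ..
    have hmA : ∀ (i : Fin n) (v : Fin n → Γ → ℝ) (α : Γ),
        allocSlice Θ αeff i (Function.update v i 0) α = allocSlice Θ αeff i v α := by
      intro i v α; unfold allocSlice typeSlice; simp only [hmu]
    have hmS : ∀ (i : Fin n) (v : Fin n → Γ → ℝ) (β : Γ),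
        ∑ j ∈ Finset.univ.erase i, Function.update v i 0 j β
          = ∑ j ∈ Finset.univ.erase i, v j β := by
      intro i v β
      exact Finset.sum_congr rfl fun j hj => by
        rw [Function.update_of_ne (Finset.ne_of_mem_erase hj)]
    -- the key value computation
    have key : ∀ (i : Fin n) (v : Fin n → Γ → ℝ) (α : Γ) (vt : Γ → ℝ),
        vt ∈ allocSlice Θ αeff i v α →
        hAux Θ αeff p i α (Function.update v i 0)
          = p i (Function.update v i vt) + ∑ j ∈ Finset.univ.erase i, v j α := by
      intro i v α vt ht
      have ht' : vt ∈ allocSlice Θ αeff i (Function.update v i 0) α := by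
        rw [hmA]; exact ht
      rw [hAux, if_pos ⟨vt, ht'⟩,
        gAux_val Θ αeff p i hIC (Function.update v i 0) α vt ht', hmu, hmS]
    have hwα : ∀ (i : Fin n) (v : Fin n → Γ → ℝ) (α : Γ) (vt : Γ → ℝ),
        vt ∈ allocSlice Θ αeff i v α →
        welfare (Function.update v i vt)
          = vt α + ∑ j ∈ Finset.univ.erase i, v j α := by
      intro i v α vt ht
      rw [← heff (Function.update v i vt), ht.2, sum_update]
    refine ⟨fun i α v => hAux Θ αeff p i α (Function.update v i 0), ?_, ?_, ?_⟩
    · -- IndepOf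
      intro i α v v' hvv'
      have : Function.update v i 0 = Function.update v' i 0 := by
        funext j
        by_cases hj : j = i
        · subst hj; simp
        · rw [Function.update_of_ne hj, Function.update_of_ne hj, hvv' j hj]
      simp only [this]
    · -- price identity
      intro i v hv
      have hk := key i v (αeff v) (v i) (hself i v hv)
      rw [Function.update_eq_self] at hk
      simp only [hk]; ring
    · -- ConstrGamma
      intro i v hts
      constructor
      · intro α vt ht
        have h1 := hIR i (Function.update v i vt) ht.1
        rw [Function.update_self, ht.2] at h1
        simp only [key i v α vt ht, hwα i v α vt ht]
        linarith
      · intro α β vt ht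
        simp only [key i v α vt ht, hwα i v α vt ht]
        by_cases hβ : (allocSlice Θ αeff i v β).Nonempty
        · obtain ⟨vs, hs⟩ := hβ
          simp only [key i v β vs hs]
          have h1 := hIC i (Function.update v i vt) (Function.update v i vs) ht.1 hs.1
            (fun j hj => by rw [Function.update_of_ne hj, Function.update_of_ne hj])
          simp only [Function.update_self, ht.2, hs.2] at h1
          linarith
        · have hβ' : ¬ (allocSlice Θ αeff i (Function.update v i 0) β).Nonempty := by
            rw [hmA]; exact hβ
          have hα' : (allocSlice Θ αeff i (Function.update v i 0) α).Nonempty := by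
            rw [hmA]; exact ⟨vt, ht⟩
          have hle : hAux Θ αeff p i α (Function.update v i 0)
              ≤ hAux Θ αeff p i β (Function.update v i 0) := by
            conv_lhs => rw [hAux, if_pos hα']
            rw [hAux, if_neg hβ']
            exact le_csSup ((Set.toFinite _).bddAbove) (Set.mem_image_of_mem _ hα')
          have h2 : vt β + ∑ j ∈ Finset.univ.erase i, v j β
              ≤ welfare (Function.update v i vt) := by
            rw [← sum_update i v vt β]
            exact welfare_le _ β
          rw [hwα i v α vt ht] at h2
          rw [key i v α vt ht] at hle
          linarith
  · rintro ⟨h, hind, hprice, hconstr⟩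
    constructor
    · intro i v v' hv hv' hagree
      have hts : (typeSlice Θ i v).Nonempty := ⟨v i, (hself i v hv).1⟩
      have hc := (hconstr i v hts).2 (αeff v) (αeff v') (v i) (hself i v hv)
      rw [Function.update_eq_self, ← heff v,
        ← Finset.add_sum_erase _ (fun j => v j (αeff v)) (Finset.mem_univ i)] at hc
      have hv'eq : h i (αeff v') v' = h i (αeff v') v :=
        hind i (αeff v') v' v fun j hj => (hagree j hj).symm
      have hsum : ∑ j ∈ Finset.univ.erase i, v' j (αeff v')
          = ∑ j ∈ Finset.univ.erase i, v j (αeff v') :=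
        Finset.sum_congr rfl fun j hj => by
          rw [hagree j (Finset.ne_of_mem_erase hj)]
      rw [hprice i v hv, hprice i v' hv', hv'eq, hsum]
      simp only at hc
      linarith
    · intro i v hv
      have hts : (typeSlice Θ i v).Nonempty := ⟨v i, (hself i v hv).1⟩
      have hc := (hconstr i v hts).1 (αeff v) (v i) (hself i v hv)
      rw [Function.update_eq_self, ← heff v,
        ← Finset.add_sum_erase _ (fun j => v j (αeff v)) (Finset.mem_univ i)] at hc
      rw [hprice i v hv]
      simp only at hc
      linarith
end

section
/- Closure of the Constr-Γ feasible set under pointwise maximum: fix an agent i and v_{-i} ∈ Θ_{-i}. If (h^α)_{α∈Γ} and (g^α)_{α∈Γ} both satisfy Constr-Γ at v_{-i}, then the family (max(h^α, g^α))_{α∈Γ} also satisfies Constr-Γ at v_{-i}. -/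
variable {n : ℕ} {Γ : Type*}

/-- Closure of the Constr-Γ feasible set under pointwise maximum. -/
theorem constrGamma_max_closed [Fintype Γ] [Nonempty Γ]
    (Θ : Set (Fin n → Γ → ℝ))
    (αeff : (Fin n → Γ → ℝ) → Γ)
    (heff : ∀ v : Fin n → Γ → ℝ, ∑ j, v j (αeff v) = welfare v)
    (i : Fin n) (v : Fin n → Γ → ℝ)
    (hne : (typeSlice Θ i v).Nonempty)
    (h g : Γ → ℝ)
    (hh : ConstrGamma Θ αeff i v h) (hg : ConstrGamma Θ αeff i v g) :
    ConstrGamma Θ αeff i v (fun α => max (h α) (g α)) := by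
  obtain ⟨hh1, hh2⟩ := hh
  obtain ⟨hg1, hg2⟩ := hg
  constructor
  · intro α vt hvt
    exact max_le (hh1 α vt hvt) (hg1 α vt hvt)
  · intro α β vt hvt
    rcases le_total (h α) (g α) with hc | hc
    · calc max (h α) (g α) - max (h β) (g β) = g α - max (h β) (g β) := by
            rw [max_eq_right hc]
        _ ≤ g α - g β := by gcongr; exact le_max_right _ _
        _ ≤ _ := hg2 α β vt hvt
    · calc max (h α) (g α) - max (h β) (g β) = h α - max (h β) (g β) := by
            rw [max_eq_left hc]
        _ ≤ h α - h β := by gcongr; exact le_max_left _ _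
        _ ≤ _ := hh2 α β vt hvt
end

section
/- Existence of a greatest feasible solution to Constr-Γ: fix an agent i and v_{-i} ∈ Θ_{-i}, and suppose that Θ_i^α(v_{-i}) is nonempty for every α ∈ Γ and that the set {w(ṽ_i, v_{-i}) : ṽ_i ∈ Θ_i(v_{-i})} is bounded below. Then there exists a family (h*^α)_{α∈Γ} satisfying Constr-Γ at v_{-i} such that every family (h^α)_{α∈Γ} satisfying Constr-Γ at v_{-i} has h^α ≤ h*^α for all α ∈ Γ. -/
variable {n : ℕ} {Γ : Type*}

/-- Existence of a greatest feasible solution to Constr-Γ. -/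
theorem constrGamma_greatest_solution [Fintype Γ] [Nonempty Γ]
    (Θ : Set (Fin n → Γ → ℝ))
    (αeff : (Fin n → Γ → ℝ) → Γ)
    (heff : ∀ v : Fin n → Γ → ℝ, ∑ j, v j (αeff v) = welfare v)
    (i : Fin n) (v : Fin n → Γ → ℝ)
    (hne : ∀ α : Γ, (allocSlice Θ αeff i v α).Nonempty)
    (hbdd : BddBelow ((fun vi => welfare (Function.update v i vi)) '' typeSlice Θ i v)) :
    ∃ hstar : Γ → ℝ, ConstrGamma Θ αeff i v hstar ∧
      ∀ h : Γ → ℝ, ConstrGamma Θ αeff i v h → ∀ α : Γ, h α ≤ hstar α := by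
  classical
  obtain ⟨c, hc⟩ := hbdd
  set S : Set (Γ → ℝ) := {h | ConstrGamma Θ αeff i v h} with hS
  have hwel : ∀ (vt : Γ → ℝ) (β : Γ),
      vt β + ∑ j ∈ Finset.univ.erase i, v j β ≤ welfare (Function.update v i vt) := by
    intro vt β
    have h1 : ∑ j, (Function.update v i vt) j β
        = vt β + ∑ j ∈ Finset.univ.erase i, v j β := by
      rw [← Finset.add_sum_erase _ _ (Finset.mem_univ i)]
      congr 1
      · simp
      · exact Finset.sum_congr rfl fun j hj => by
          rw [Function.update_of_ne (Finset.ne_of_mem_erase hj)]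
    rw [← h1]
    exact Finset.le_sup' (fun γ => ∑ j, (Function.update v i vt) j γ) (Finset.mem_univ β)
  have hconst : (fun _ : Γ => c) ∈ S := by
    constructor
    · intro α vt hvt
      exact hc ⟨vt, hvt.1, rfl⟩
    · intro α β vt hvt
      have := hwel vt β
      linarith
  have hSne : S.Nonempty := ⟨_, hconst⟩
  have hbddA : ∀ α : Γ, BddAbove ((fun h => h α) '' S) := by
    intro α
    obtain ⟨vt, hvt⟩ := hne α
    exact ⟨welfare (Function.update v i vt), by
      rintro x ⟨h, hhS, rfl⟩
      exact hhS.1 α vt hvt⟩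
  refine ⟨fun α => sSup ((fun h => h α) '' S), ?_, ?_⟩
  · constructor
    · intro α vt hvt
      apply csSup_le (hSne.image _)
      rintro x ⟨h, hhS, rfl⟩
      exact hhS.1 α vt hvt
    · intro α β vt hvt
      rw [sub_le_iff_le_add]
      apply csSup_le (hSne.image _)
      rintro x ⟨h, hhS, rfl⟩
      have h1 := hhS.2 α β vt hvt
      have h2 : h β ≤ sSup ((fun h => h β) '' S) :=
        le_csSup (hbddA β) ⟨h, hhS, rfl⟩
      linarith
  · intro h hh α
    exact le_csSup (hbddA α) ⟨h, hh, rfl⟩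
end

section
/- Every IC pricing rule is a component-wise Groves mechanism: if p is an IC pricing rule, then for every agent i and every v_{-i} ∈ Θ_{-i} there exist reals h_i^C(v_{-i}), one for each connected component C of Θ_i(v_{-i}), such that p_i(v_i, v_{-i}) = h_i^{C(v_i, v_{-i})}(v_{-i}) − Σ_{j≠i} v_j(α^eff(v_i, v_{-i})) for every v_i ∈ Θ_i(v_{-i}), where C(v_i, v_{-i}) is the connected component of Θ_i(v_{-i}) containing v_i. -/
variable {n : ℕ} {Γ : Type*}

/-!
Fix agent `i` and the other agents' types, and let `g x = p_i(x, v_{-i}) + ∑_{j ≠ i} v_j(α(x, v_{-i}))`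
be the Groves term implied by `p`. Incentive compatibility between the reports `x'` and `x`, combined
with efficiency at `x`, gives `g x' - g x ≤ (x' - x)(α(x')) - (x' - x)(α(x))`. Used in both directions,
this shows that `g` only depends on the efficient allocation, so it takes finitely many values, and
that `g` is `2`-Lipschitz for the sup metric. A continuous function with finite image is constant on
connected sets, hence `g` factors through the connected components of `Θ_i(v_{-i})`.
-/

open Function Set

theorem Set.finite_image_of_factorsThrough {α β ι : Type*} [Finite ι] {s : Set α} {f : α → β}
    (k : α → ι) (hk : ∀ x ∈ s, ∀ y ∈ s, k x = k y → f x = f y) : (f '' s).Finite := by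
  refine (finite_iUnion fun c : ι => (?_ : (f '' {x ∈ s | k x = c}).Subsingleton).finite).subset ?_
  · rintro _ ⟨x, ⟨hx, rfl⟩, rfl⟩ _ ⟨y, ⟨hy, hxy⟩, rfl⟩
    exact hk x hx y hy hxy.symm
  · rintro _ ⟨x, hx, rfl⟩
    exact mem_iUnion.2 ⟨k x, x, ⟨hx, rfl⟩, rfl⟩

theorem exists_eq_comp_connectedComponentIn_of_finite_image {X β : Type*} [TopologicalSpace X]
    [TopologicalSpace β] [T1Space β] [Nonempty β] {S : Set X} {f : X → β}
    (hf : ContinuousOn f S) (hfin : (f '' S).Finite) :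
    ∃ h : Set X → β, ∀ x ∈ S, f x = h (connectedComponentIn S x) := by
  have hconst : ∀ x ∈ S, ∀ y ∈ connectedComponentIn S x, f y = f x := fun x hx y hy =>
    isPreconnected_connectedComponentIn.constant_of_mapsTo hfin.isDiscrete
      (hf.mono (connectedComponentIn_subset S x))
      ((mapsTo_image f S).mono_left (connectedComponentIn_subset S x)) hy
      (mem_connectedComponentIn hx)
  have hfactor : FactorsThrough (S.domRestrict f) fun x : S => connectedComponentIn S x :=
    fun x y (hxy : connectedComponentIn S x = connectedComponentIn S y) =>
      (hconst x x.2 y (by rw [hxy]; exact mem_connectedComponentIn y.2)).symm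
  exact ⟨extend (fun x : S => connectedComponentIn S x) (S.domRestrict f)
      fun _ => Classical.arbitrary β,
    fun x hx => (hfactor.extend_apply _ ⟨x, hx⟩).symm⟩

theorem sum_update_apply_eq_add_sum_erase {ι M : Type*} [Fintype ι] [DecidableEq ι]
    [AddCommMonoid M] (v : ι → Γ → M) (i : ι) (x : Γ → M) (γ : Γ) :
    ∑ j, update v i x j γ = x γ + ∑ j ∈ Finset.univ.erase i, v j γ := by
  rw [← Finset.add_sum_erase _ _ (Finset.mem_univ i), update_self]
  exact congrArg _ <| Finset.sum_congr rfl fun j hj => by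
    rw [update_of_ne (Finset.ne_of_mem_erase hj)]

theorem sum_le_welfare [Fintype Γ] [Nonempty Γ] (v : Fin n → Γ → ℝ) (γ : Γ) :
    ∑ j, v j γ ≤ welfare v :=
  Finset.le_sup' (fun γ => ∑ j, v j γ) (Finset.mem_univ γ)

def grovesTerm (αeff : (Fin n → Γ → ℝ) → Γ) (p : Fin n → (Fin n → Γ → ℝ) → ℝ) (i : Fin n)
    (v : Fin n → Γ → ℝ) (x : Γ → ℝ) : ℝ :=
  p i (update v i x) + ∑ j ∈ Finset.univ.erase i, v j (αeff (update v i x))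

section Groves

variable [Fintype Γ] [Nonempty Γ] {Θ : Set (Fin n → Γ → ℝ)} {αeff : (Fin n → Γ → ℝ) → Γ}
  {p : Fin n → (Fin n → Γ → ℝ) → ℝ} {i : Fin n} {v : Fin n → Γ → ℝ}

theorem grovesTerm_sub_le (heff : ∀ v : Fin n → Γ → ℝ, ∑ j, v j (αeff v) = welfare v)
    (hp : IC Θ αeff p) {x x' : Γ → ℝ} (hx : x ∈ typeSlice Θ i v) (hx' : x' ∈ typeSlice Θ i v) :
    grovesTerm αeff p i v x' - grovesTerm αeff p i v x
      ≤ (x' (αeff (update v i x')) - x (αeff (update v i x')))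
        - (x' (αeff (update v i x)) - x (αeff (update v i x))) := by
  have hic := hp i (update v i x') (update v i x) hx' hx fun j hj => by
    rw [update_of_ne hj, update_of_ne hj]
  have hmax := sum_le_welfare (update v i x) (αeff (update v i x'))
  rw [← heff, sum_update_apply_eq_add_sum_erase, sum_update_apply_eq_add_sum_erase] at hmax
  simp only [update_self] at hic
  unfold grovesTerm
  linarith

theorem grovesTerm_eq_of_alloc_eq (heff : ∀ v : Fin n → Γ → ℝ, ∑ j, v j (αeff v) = welfare v)
    (hp : IC Θ αeff p) {x x' : Γ → ℝ} (hx : x ∈ typeSlice Θ i v) (hx' : x' ∈ typeSlice Θ i v)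
    (hα : αeff (update v i x) = αeff (update v i x')) :
    grovesTerm αeff p i v x = grovesTerm αeff p i v x' := by
  have h₁ := grovesTerm_sub_le heff hp hx hx'
  have h₂ := grovesTerm_sub_le heff hp hx' hx
  rw [hα] at h₁ h₂
  linarith

theorem finite_image_grovesTerm (heff : ∀ v : Fin n → Γ → ℝ, ∑ j, v j (αeff v) = welfare v)
    (hp : IC Θ αeff p) : (grovesTerm αeff p i v '' typeSlice Θ i v).Finite :=
  finite_image_of_factorsThrough (fun x => αeff (update v i x)) fun _ hx _ hx' hα =>
    grovesTerm_eq_of_alloc_eq heff hp hx hx' hα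

theorem lipschitzOnWith_grovesTerm (heff : ∀ v : Fin n → Γ → ℝ, ∑ j, v j (αeff v) = welfare v)
    (hp : IC Θ αeff p) : LipschitzOnWith 2 (grovesTerm αeff p i v) (typeSlice Θ i v) := by
  refine LipschitzOnWith.of_dist_le_mul fun x' hx' x hx => ?_
  have hcoord : ∀ γ, |x' γ - x γ| ≤ dist x' x := fun γ => by
    simpa only [Real.dist_eq] using dist_le_pi_dist x' x γ
  have h₁ := grovesTerm_sub_le heff hp hx hx'
  have h₂ := grovesTerm_sub_le heff hp hx' hx
  have e₁ := abs_le.1 (hcoord (αeff (update v i x')))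
  have e₂ := abs_le.1 (hcoord (αeff (update v i x)))
  rw [Real.dist_eq, abs_le, NNReal.coe_ofNat]
  constructor <;> linarith

end Groves

/-- Every IC pricing rule is a component-wise Groves mechanism. -/
theorem IC_is_componentwise_groves [Fintype Γ] [Nonempty Γ]
    (Θ : Set (Fin n → Γ → ℝ))
    (αeff : (Fin n → Γ → ℝ) → Γ)
    (heff : ∀ v : Fin n → Γ → ℝ, ∑ j, v j (αeff v) = welfare v)
    (p : Fin n → (Fin n → Γ → ℝ) → ℝ)
    (hp : IC Θ αeff p) :
    ∀ (i : Fin n) (v : Fin n → Γ → ℝ), (typeSlice Θ i v).Nonempty →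
      ∃ h : Set (Γ → ℝ) → ℝ,
        ∀ vi ∈ typeSlice Θ i v,
          p i (Function.update v i vi)
            = h (connectedComponentIn (typeSlice Θ i v) vi)
              - ∑ j ∈ Finset.univ.erase i, v j (αeff (Function.update v i vi)) := by
  intro i v _
  obtain ⟨h, hh⟩ := exists_eq_comp_connectedComponentIn_of_finite_image
    (lipschitzOnWith_grovesTerm heff hp).continuousOn (finite_image_grovesTerm heff hp)
  exact ⟨h, fun vi hvi => eq_sub_of_add_eq (hh vi hvi)⟩
end

section
/- IC characterization of component-wise Groves mechanisms: a component-wise Groves pricing rule given by reals (h_i^C(v_{-i})) is IC if and only if for every agent i, every v_{-i} ∈ Θ_{-i}, all connected components C, D of Θ_i(v_{-i}), every ṽ^C ∈ C, and every ṽ^D ∈ D, it holds that h_i^C(v_{-i}) − h_i^D(v_{-i}) ≤ w(ṽ^C, v_{-i}) − (ṽ^C(α^eff(ṽ^D, v_{-i})) + Σ_{j≠i} v_j(α^eff(ṽ^D, v_{-i}))). -/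
variable {n : ℕ} {Γ : Type*}

lemma update_eq_of_agree {n : ℕ} {Γ : Type*} (v v' : Fin n → Γ → ℝ) (i : Fin n)
    (hag : ∀ j, j ≠ i → v j = v' j) (x : Γ → ℝ) :
    Function.update v i x = Function.update v' i x := by
  funext j
  rcases eq_or_ne j i with rfl | hj
  · simp
  · simp [Function.update_apply, hj, hag j hj]

lemma typeSlice_eq_of_agree {n : ℕ} {Γ : Type*} (Θ : Set (Fin n → Γ → ℝ))
    (v v' : Fin n → Γ → ℝ) (i : Fin n) (hag : ∀ j, j ≠ i → v j = v' j) :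
    typeSlice Θ i v = typeSlice Θ i v' := by
  ext x
  simp only [typeSlice, Set.mem_setOf_eq, update_eq_of_agree v v' i hag x]

/-- IC characterization of component-wise Groves mechanisms. -/
theorem componentwise_groves_IC_iff [Fintype Γ] [Nonempty Γ]
    (Θ : Set (Fin n → Γ → ℝ))
    (αeff : (Fin n → Γ → ℝ) → Γ)
    (heff : ∀ v : Fin n → Γ → ℝ, ∑ j, v j (αeff v) = welfare v)
    (h : Fin n → (Fin n → Γ → ℝ) → Set (Γ → ℝ) → ℝ)
    (hind : ∀ (i : Fin n) (C : Set (Γ → ℝ)), IndepOf i (fun v => h i v C)) :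
    IC Θ αeff
        (fun i v => h i v (connectedComponentIn (typeSlice Θ i v) (v i))
          - ∑ j ∈ Finset.univ.erase i, v j (αeff v)) ↔
      ∀ (i : Fin n) (v : Fin n → Γ → ℝ), (typeSlice Θ i v).Nonempty →
        ∀ vC ∈ typeSlice Θ i v, ∀ vD ∈ typeSlice Θ i v,
          h i v (connectedComponentIn (typeSlice Θ i v) vC)
              - h i v (connectedComponentIn (typeSlice Θ i v) vD)
            ≤ welfare (Function.update v i vC)
              - (vC (αeff (Function.update v i vD))
                  + ∑ j ∈ Finset.univ.erase i, v j (αeff (Function.update v i vD))) := by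
  constructor
  · intro hIC i v hne vC hvC vD hvD
    set V := Function.update v i vC with hV
    set V' := Function.update v i vD with hV'
    have hagV : ∀ j, j ≠ i → V j = v j := fun j hj => Function.update_of_ne hj _ _
    have hagV' : ∀ j, j ≠ i → V' j = v j := fun j hj => Function.update_of_ne hj _ _
    have hag : ∀ j, j ≠ i → V j = V' j := fun j hj => (hagV j hj).trans (hagV' j hj).symm
    have hsV : typeSlice Θ i V = typeSlice Θ i v := typeSlice_eq_of_agree Θ V v i hagV
    have hsV' : typeSlice Θ i V' = typeSlice Θ i v := typeSlice_eq_of_agree Θ V' v i hagV'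
    have key := hIC i V V' hvC hvD hag
    simp only [hsV, hsV'] at key
    have hVi : V i = vC := Function.update_self i vC v
    have hV'i : V' i = vD := Function.update_self i vD v
    rw [hVi, hV'i] at key
    have e1 : h i V (connectedComponentIn (typeSlice Θ i v) vC)
        = h i v (connectedComponentIn (typeSlice Θ i v) vC) := hind i _ V v hagV
    have e2 : h i V' (connectedComponentIn (typeSlice Θ i v) vD)
        = h i v (connectedComponentIn (typeSlice Θ i v) vD) := hind i _ V' v hagV'
    rw [e1, e2] at key
    have hsum : ∀ (W : Fin n → Γ → ℝ) (hW : ∀ j, j ≠ i → W j = v j) (x : Γ),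
        ∑ j ∈ Finset.univ.erase i, W j x = ∑ j ∈ Finset.univ.erase i, v j x := by
      intro W hW x
      exact Finset.sum_congr rfl fun j hj => by
        rw [hW j (Finset.ne_of_mem_erase hj)]
    rw [hsum V hagV, hsum V' hagV'] at key
    have hw : welfare V = vC (αeff V) + ∑ j ∈ Finset.univ.erase i, v j (αeff V) := by
      rw [← heff V, ← hsum V hagV (αeff V), ← hVi,
        Finset.add_sum_erase Finset.univ (fun j => V j (αeff V)) (Finset.mem_univ i)]
    rw [hw]
    linarith [key]
  · intro hc i v v' hvΘ hv'Θ hag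
    have hvC : v i ∈ typeSlice Θ i v := by
      simp only [typeSlice, Set.mem_setOf_eq, Function.update_eq_self]; exact hvΘ
    have hvD : v' i ∈ typeSlice Θ i v := by
      have : Function.update v i (v' i) = v' :=
        (update_eq_of_agree v v' i hag (v' i)).trans (Function.update_eq_self i v')
      simp only [typeSlice, Set.mem_setOf_eq, this]; exact hv'Θ
    have key := hc i v ⟨v i, hvC⟩ (v i) hvC (v' i) hvD
    rw [Function.update_eq_self,
      (update_eq_of_agree v v' i hag (v' i)).trans (Function.update_eq_self i v')] at key
    have hsV' : typeSlice Θ i v' = typeSlice Θ i v :=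
      typeSlice_eq_of_agree Θ v' v i (fun j hj => (hag j hj).symm)
    have hindv' : h i v' (connectedComponentIn (typeSlice Θ i v') (v' i))
        = h i v (connectedComponentIn (typeSlice Θ i v) (v' i)) := by
      rw [hsV']
      exact hind i _ v' v (fun j hj => (hag j hj).symm)
    have hw : welfare v = v i (αeff v) + ∑ j ∈ Finset.univ.erase i, v j (αeff v) := by
      rw [← heff v, Finset.add_sum_erase Finset.univ (fun j => v j (αeff v)) (Finset.mem_univ i)]
    rw [hw] at key
    have hsum2 : ∑ j ∈ Finset.univ.erase i, v' j (αeff v')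
        = ∑ j ∈ Finset.univ.erase i, v j (αeff v') :=
      Finset.sum_congr rfl fun j hj => by rw [hag j (Finset.ne_of_mem_erase hj)]
    simp only [ge_iff_le, hindv', hsum2]
    linarith [key]
end

section
/- Existence of a greatest feasible solution to Constr-C: fix an agent i and v_{-i} ∈ Θ_{-i}, and suppose Θ_i(v_{-i}) is nonempty with finitely many connected components and that the set {w(ṽ, v_{-i}) : ṽ ∈ Θ_i(v_{-i})} is bounded below. Then there exists a family (h*^C)_C (one real per connected component C of Θ_i(v_{-i})) satisfying Constr-C at v_{-i} such that every family (h^C)_C satisfying Constr-C at v_{-i} has h^C ≤ h*^C for every connected component C. -/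
variable {n : ℕ} {Γ : Type*}

lemma sum_update_eq' {n : ℕ} {Γ : Type*} [Fintype Γ] (v : Fin n → Γ → ℝ) (i : Fin n)
    (vi : Γ → ℝ) (γ : Γ) :
    ∑ j, Function.update v i vi j γ = vi γ + ∑ j ∈ Finset.univ.erase i, v j γ := by
  rw [← Finset.add_sum_erase _ _ (Finset.mem_univ i), Function.update_self]
  congr 1
  exact Finset.sum_congr rfl fun j hj => by
    rw [Function.update_of_ne (Finset.ne_of_mem_erase hj)]

lemma welfare_ge' {n : ℕ} {Γ : Type*} [Fintype Γ] [Nonempty Γ] (u : Fin n → Γ → ℝ) (γ : Γ) :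
    ∑ j, u j γ ≤ welfare u := by
  unfold welfare
  exact Finset.le_sup' (fun γ => ∑ j, u j γ) (Finset.mem_univ γ)

/-- Existence of a greatest feasible solution to Constr-C. -/
theorem constrC_greatest_solution [Fintype Γ] [Nonempty Γ]
    (Θ : Set (Fin n → Γ → ℝ))
    (αeff : (Fin n → Γ → ℝ) → Γ)
    (heff : ∀ v : Fin n → Γ → ℝ, ∑ j, v j (αeff v) = welfare v)
    (i : Fin n) (v : Fin n → Γ → ℝ)
    (hne : (typeSlice Θ i v).Nonempty)
    (hfin : {C : Set (Γ → ℝ) |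
      ∃ vi ∈ typeSlice Θ i v, C = connectedComponentIn (typeSlice Θ i v) vi}.Finite)
    (hbdd : BddBelow ((fun vi => welfare (Function.update v i vi)) '' typeSlice Θ i v)) :
    ∃ hstar : Set (Γ → ℝ) → ℝ, ConstrC Θ αeff i v hstar ∧
      ∀ h : Set (Γ → ℝ) → ℝ, ConstrC Θ αeff i v h →
        ∀ vi ∈ typeSlice Θ i v,
          h (connectedComponentIn (typeSlice Θ i v) vi)
            ≤ hstar (connectedComponentIn (typeSlice Θ i v) vi) := by
    classical
  obtain ⟨m, hm⟩ := hbdd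
  set T := typeSlice Θ i v with hT
  set S := {h : Set (Γ → ℝ) → ℝ | ConstrC Θ αeff i v h} with hSdef
  have h0mem : (fun _ => m) ∈ S := by
    constructor
    · intro vt hvt
      exact hm ⟨vt, hvt, rfl⟩
    · intro vC hvC vD hvD
      simp only [sub_self]
      have h1 : vC (αeff (Function.update v i vD))
          + ∑ j ∈ Finset.univ.erase i, v j (αeff (Function.update v i vD))
          ≤ welfare (Function.update v i vC) := by
        rw [← sum_update_eq' v i vC]
        exact welfare_ge' _ _
      linarith
  have hSne : S.Nonempty := ⟨_, h0mem⟩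
  have hbddC : ∀ vi ∈ T, BddAbove ((fun h : Set (Γ → ℝ) → ℝ => h (connectedComponentIn T vi)) '' S) := by
    intro vi hvi
    refine ⟨welfare (Function.update v i vi), ?_⟩
    rintro x ⟨h, hh, rfl⟩
    exact hh.1 vi hvi
  refine ⟨fun C => sSup ((fun h : Set (Γ → ℝ) → ℝ => h C) '' S), ?_, ?_⟩
  · constructor
    · intro vt hvt
      refine csSup_le (hSne.image _) ?_
      rintro x ⟨h, hh, rfl⟩
      exact hh.1 vt hvt
    · intro vC hvC vD hvD
      rw [sub_le_iff_le_add]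
      refine csSup_le (hSne.image _) ?_
      rintro x ⟨h, hh, rfl⟩
      have h2 := hh.2 vC hvC vD hvD
      have h3 : h (connectedComponentIn T vD)
          ≤ sSup ((fun h : Set (Γ → ℝ) → ℝ => h (connectedComponentIn T vD)) '' S) :=
        le_csSup (hbddC vD hvD) ⟨h, hh, rfl⟩
      linarith
  · intro h hh vi hvi
    exact le_csSup (hbddC vi hvi) ⟨h, hh, rfl⟩
end

section
/- A disconnected joint type space all of whose slices are connected: let n ≥ 2, and let L, H ∈ ℝ and ε > 0 satisfy L + ε < H − ε. Define Θ = {v ∈ ℝ^n : v_i ∈ [H−ε, H+ε] for all i} ∪ {v ∈ ℝ^n : v_i ∈ [L−ε, L+ε] for all i}. Then Θ is not a connected subset of ℝ^n, but for every agent i and every v_{-i} ∈ Θ_{-i}, the slice Θ_i(v_{-i}) = {v_i ∈ ℝ : (v_i, v_{-i}) ∈ Θ} is a connected subset of ℝ. -/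
/-!
The two cubes are separated by any single coordinate, whose image of `Θ` would otherwise be a
connected subset of `ℝ` missing a point between `L + ε` and `H - ε`. A slice, on the other hand,
only varies coordinate `i`; since `n ≥ 2` some other coordinate stays fixed and pins the slice to
one of the two cubes, in which it is a full side interval.
-/

open Set Function

theorem not_isPreconnected_union_of_separated {X α : Type*} [TopologicalSpace X] [LinearOrder α]
    [TopologicalSpace α] [OrderClosedTopology α] {A B : Set X} {f : X → α} (hf : Continuous f)
    {c : α} (hA : A.Nonempty) (hB : B.Nonempty) (hAc : ∀ x ∈ A, c < f x)
    (hBc : ∀ x ∈ B, f x < c) : ¬ IsPreconnected (A ∪ B) := by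
  rintro hAB
  obtain ⟨a, ha⟩ := hA
  obtain ⟨b, hb⟩ := hB
  obtain ⟨x, hx, hxc⟩ := hAB.intermediate_value (Or.inr hb) (Or.inl ha) hf.continuousOn
    ⟨(hBc b hb).le, (hAc a ha).le⟩
  rcases hx with hx | hx
  · exact (hAc x hx).ne' hxc
  · exact (hBc x hx).ne hxc

section Slices

variable {ι α : Type*} [DecidableEq ι] {s t : Set α} {v : ι → α} {i : ι} {x₀ : α}

theorem preimage_update_setOf_forall_mem (h : ∀ k, update v i x₀ k ∈ s) :
    update v i ⁻¹' {w | ∀ k, w k ∈ s} = s := by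
  ext x
  simp only [mem_preimage, mem_ofPred_eq, forall_update_iff] at h ⊢
  exact ⟨And.left, fun hx => ⟨hx, h.2⟩⟩

theorem preimage_update_setOf_forall_mem_eq_empty (hst : Disjoint s t) {j : ι} (hji : j ≠ i)
    (h : ∀ k, update v i x₀ k ∈ s) : update v i ⁻¹' {w | ∀ k, w k ∈ t} = ∅ := by
  refine eq_empty_of_forall_notMem fun x hx => hst.notMem_of_mem_left ?_ (hx j)
  simpa only [update_of_ne hji] using h j

theorem preimage_update_union_eq_or (hst : Disjoint s t) {j : ι} (hji : j ≠ i)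
    (h : x₀ ∈ update v i ⁻¹' ({w | ∀ k, w k ∈ s} ∪ {w | ∀ k, w k ∈ t})) :
    update v i ⁻¹' ({w | ∀ k, w k ∈ s} ∪ {w | ∀ k, w k ∈ t}) = s ∨
      update v i ⁻¹' ({w | ∀ k, w k ∈ s} ∪ {w | ∀ k, w k ∈ t}) = t := by
  rw [preimage_union]
  rcases h with h | h
  · left
    rw [preimage_update_setOf_forall_mem h,
      preimage_update_setOf_forall_mem_eq_empty hst hji h, union_empty]
  · right
    rw [preimage_update_setOf_forall_mem h,
      preimage_update_setOf_forall_mem_eq_empty hst.symm hji h, empty_union]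

end Slices

/-- A disconnected joint type space all of whose slices are connected. -/
theorem disconnected_joint_space_connected_slices
    (n : ℕ) (hn : 2 ≤ n) (L H ε : ℝ) (hε : 0 < ε) (hLH : L + ε < H - ε)
    (Θ : Set (Fin n → ℝ))
    (hΘ : Θ = {v | ∀ i, v i ∈ Set.Icc (H - ε) (H + ε)}
            ∪ {v | ∀ i, v i ∈ Set.Icc (L - ε) (L + ε)}) :
    ¬ IsConnected Θ ∧
      ∀ (i : Fin n) (v : Fin n → ℝ),
        ({x : ℝ | Function.update v i x ∈ Θ}).Nonempty →
        IsConnected {x : ℝ | Function.update v i x ∈ Θ} := by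
  subst hΘ
  have hdisj : Disjoint (Icc (H - ε) (H + ε)) (Icc (L - ε) (L + ε)) :=
    disjoint_left.2 fun x hH hL => by linarith [hH.1, hL.2]
  refine ⟨fun hconn => ?_, fun i v hne => ?_⟩
  · let i₀ : Fin n := ⟨0, by omega⟩
    exact not_isPreconnected_union_of_separated (continuous_apply i₀) (c := (L + H) / 2)
      ⟨fun _ => H, fun _ => ⟨by linarith, by linarith⟩⟩
      ⟨fun _ => L, fun _ => ⟨by linarith, by linarith⟩⟩
      (fun v hv => by linarith [(hv i₀).1]) (fun v hv => by linarith [(hv i₀).2])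
      hconn.isPreconnected
  · obtain ⟨j, hji⟩ := Fintype.exists_ne_of_one_lt_card (by rw [Fintype.card_fin]; omega) i
    obtain ⟨x₀, hx₀⟩ := hne
    refine ⟨⟨x₀, hx₀⟩, ?_⟩
    change IsPreconnected (update v i ⁻¹' _)
    rcases preimage_update_union_eq_or hdisj hji hx₀ with h | h <;> rw [h] <;>
      exact isPreconnected_Icc
end
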